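/- arXiv:1603.09325 — 3 statements merged into one kernel-verified Lean document; each statement's English description precedes it below -/
import Mathlib

section
/- Let u₁,…,u_m ∈ ℝᵏ be stencil points, let σ index the monomials of total degree ≤ d in k variables, let V be the m×|σ| generalized Vandermonde matrix with V(i,s) equal to the monomial s evaluated at uᵢ, let W be an m×m diagonal matrix with positive diagonal entries, and assume VᵀW²V is invertible. Define the generalized Lagrange polynomial (GLP) basis functions φⱼ(u) = Σ_{s∈σ} C(s,j)·u^s, where C = (VᵀW²V)⁻¹VᵀW². Then the GLP basis reproduces polynomials exactly: for every real polynomial f in k variables of total degree at most d and every u ∈ ℝᵏ, Σ_{j=1}^{m} f(uⱼ)·φⱼ(u) = f(u). -/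
open Matrix BigOperators

lemma glp_sum_aux {α β : Type*} [Fintype α] [Fintype β] [DecidableEq β]
    (a : β → ℝ) (Vv : α → β → ℝ) (Cc : β → α → ℝ) (P : β → ℝ)
    (hone : ∀ s' s, (∑ j, Cc s' j * Vv j s) = if s' = s then 1 else 0) :
    ∑ j, (∑ s, a s * Vv j s) * (∑ s', Cc s' j * P s') = ∑ s, a s * P s := by
  have h1 : ∀ j, (∑ s, a s * Vv j s) * (∑ s', Cc s' j * P s')
      = ∑ s, ∑ s', (a s * P s') * (Cc s' j * Vv j s) := by
    intro j
    rw [Finset.sum_mul_sum]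
    exact Finset.sum_congr rfl fun s _ => Finset.sum_congr rfl fun s' _ => by ring
  simp only [h1]
  rw [Finset.sum_comm]
  refine Finset.sum_congr rfl fun s _ => ?_
  rw [Finset.sum_comm]
  have h2 : ∀ s', ∑ j, (a s * P s') * (Cc s' j * Vv j s)
      = (a s * P s') * (if s' = s then 1 else 0) := by
    intro s'
    rw [← Finset.mul_sum, hone]
  simp only [h2, mul_ite, mul_one, mul_zero]
  simp

/-- the weighted least-squares GLP basis reproduces polynomials
of total degree at most `d` exactly. -/
theorem glp_polynomial_reproduction (k d m : ℕ) (pts : Fin m → Fin k → ℝ)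
    (V : Matrix (Fin m) {s : Fin k → Fin (d + 1) // ∑ i, (s i : ℕ) ≤ d} ℝ)
    (hV : ∀ i s, V i s = ∏ l, pts i l ^ ((s.1 l : ℕ)))
    (w : Fin m → ℝ) (hw : ∀ i, 0 < w i)
    (W : Matrix (Fin m) (Fin m) ℝ) (hW : W = Matrix.diagonal w)
    (hInv : IsUnit (Vᵀ * (W * W) * V))
    (C : Matrix {s : Fin k → Fin (d + 1) // ∑ i, (s i : ℕ) ≤ d} (Fin m) ℝ)
    (hC : C = (Vᵀ * (W * W) * V)⁻¹ * Vᵀ * (W * W))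
    (φ : Fin m → (Fin k → ℝ) → ℝ)
    (hφ : ∀ j u, φ j u = ∑ s, C s j * ∏ l, u l ^ ((s.1 l : ℕ)))
    (f : MvPolynomial (Fin k) ℝ) (hf : f.totalDegree ≤ d)
    (u : Fin k → ℝ) :
    ∑ j, MvPolynomial.eval (pts j) f * φ j u = MvPolynomial.eval u f := by
  classical
  have hdet : IsUnit (Vᵀ * (W * W) * V).det :=
    (Matrix.isUnit_iff_isUnit_det _).mp hInv
  have hCV : C * V = 1 := by
    have h1 : C * V = (Vᵀ * (W * W) * V)⁻¹ * (Vᵀ * (W * W) * V) := by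
      rw [hC]; simp only [Matrix.mul_assoc]
    rw [h1, Matrix.nonsing_inv_mul _ hdet]
  have hone : ∀ s' s, (∑ j, C s' j * V j s) = if s' = s then 1 else 0 := by
    intro s' s
    rw [← Matrix.mul_apply, hCV, Matrix.one_apply]
  -- index embedding
  let ι : {s : Fin k → Fin (d + 1) // ∑ i, (s i : ℕ) ≤ d} → (Fin k →₀ ℕ) :=
    fun s => Finsupp.equivFunOnFinite.symm fun l => (s.1 l : ℕ)
  have hιapp : ∀ s l, ι s l = (s.1 l : ℕ) := fun s l => rfl
  have hιinj : Function.Injective ι := by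
    intro s t h
    apply Subtype.ext
    funext l
    have := congrArg (fun g => g l) h
    simpa [hιapp, Fin.val_injective.eq_iff] using this
  let a : {s : Fin k → Fin (d + 1) // ∑ i, (s i : ℕ) ≤ d} → ℝ :=
    fun s => MvPolynomial.coeff (ι s) f
  -- expansion lemma
  have hexp : ∀ v : Fin k → ℝ,
      MvPolynomial.eval v f = ∑ s, a s * ∏ l, v l ^ ((s.1 l : ℕ)) := by
    intro v
    rw [MvPolynomial.eval_eq]
    have hprod : ∀ dd : Fin k →₀ ℕ, (∏ i ∈ dd.support, v i ^ dd i) = ∏ l, v l ^ dd l := by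
      intro dd
      refine Finset.prod_subset (Finset.subset_univ _) ?_
      intro i _ hi
      rw [Finsupp.notMem_support_iff.mp hi, pow_zero]
    have himg : (∑ s, a s * ∏ l, v l ^ ((s.1 l : ℕ)))
        = ∑ dd ∈ Finset.univ.image ι, MvPolynomial.coeff dd f * ∏ l, v l ^ dd l := by
      rw [Finset.sum_image (fun x _ y _ h => hιinj h)]
      rfl
    rw [himg]
    refine (Finset.sum_subset ?_ ?_).symm.trans
      (Finset.sum_congr rfl fun dd _ => by rw [hprod]) |>.symm
    · intro dd hdd
      have hsum : (dd.sum fun _ e => e) ≤ d :=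
        le_trans (MvPolynomial.le_totalDegree hdd) hf
      have hsum' : (∑ l, dd l) ≤ d := by
        rwa [Finsupp.sum_fintype _ _ (fun _ => rfl)] at hsum
      have hlt : ∀ l, dd l < d + 1 := by
        intro l
        have : dd l ≤ ∑ l', dd l' :=
          Finset.single_le_sum (fun _ _ => Nat.zero_le _) (Finset.mem_univ l)
        omega
      refine Finset.mem_image.mpr ⟨⟨fun l => ⟨dd l, hlt l⟩, ?_⟩, Finset.mem_univ _, ?_⟩
      · simpa using hsum'
      · apply Finsupp.ext
        intro l
        simp [hιapp]
    · intro dd _ hdd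
      rw [MvPolynomial.notMem_support_iff.mp hdd, zero_mul]
  have hevalpts : ∀ j, MvPolynomial.eval (pts j) f = ∑ s, a s * V j s := by
    intro j
    rw [hexp (pts j)]
    exact Finset.sum_congr rfl fun s _ => by rw [hV]
  rw [hexp u]
  calc ∑ j, MvPolynomial.eval (pts j) f * φ j u
      = ∑ j, (∑ s, a s * V j s) * (∑ s', C s' j * ∏ l, u l ^ ((s'.1 l : ℕ))) := by
        exact Finset.sum_congr rfl fun j _ => by rw [hevalpts, hφ]
    _ = ∑ s, a s * ∏ l, u l ^ ((s.1 l : ℕ)) :=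
        glp_sum_aux a (fun j s => V j s) (fun s j => C s j) _ hone
end

section
/- Let u₁,…,u_m ∈ ℝᵏ be stencil points, let σ index the monomials of total degree ≤ d in k variables, let V be the m×|σ| generalized Vandermonde matrix with V(i,s) equal to the monomial s evaluated at uᵢ, let W be an m×m diagonal matrix with positive diagonal entries, and assume VᵀW²V is invertible. Define the generalized Lagrange polynomial (GLP) basis functions φⱼ(u) = Σ_{s∈σ} C(s,j)·u^s, where C = (VᵀW²V)⁻¹VᵀW². Then the GLP basis functions form a partition of unity: for every u ∈ ℝᵏ, Σ_{j=1}^{m} φⱼ(u) = 1. -/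
open Matrix BigOperators

/-!
The coefficient matrix `C = (VᵀW²V)⁻¹VᵀW²` is a left inverse of `V`. The column of `V` belonging
to the constant monomial is all ones, so `C` maps the all-ones vector to the unit vector of the
constant monomial. Hence `∑ⱼ φⱼ(u) = ∑ₛ (∑ⱼ C(s,j)) u^s = u^0 = 1`.
-/

theorem Matrix.nonsing_inv_mul_mul_self {R : Type*} [CommRing R] {m n : Type*} [Fintype m]
    [Fintype n] [DecidableEq n] {N : Matrix n m R} {V : Matrix m n R} (h : IsUnit (N * V)) :
    (N * V)⁻¹ * N * V = 1 := by
  rw [Matrix.mul_assoc]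
  exact nonsing_inv_mul _ ((isUnit_iff_isUnit_det _).mp h)

theorem Matrix.sum_sum_mul_eq_of_mul_eq_one {R : Type*} [CommSemiring R] {m n : Type*}
    [Fintype m] [Fintype n] [DecidableEq n] {C : Matrix n m R} {V : Matrix m n R}
    (hCV : C * V = 1) {s₀ : n} (hs₀ : ∀ i, V i s₀ = 1) (f : n → R) :
    ∑ j, ∑ s, C s j * f s = f s₀ :=
  calc ∑ j, ∑ s, C s j * f s = ∑ s, (C * V) s s₀ * f s := by
        simp only [mul_apply, hs₀, mul_one, Finset.sum_mul]
        exact Finset.sum_comm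
    _ = f s₀ := by simp [hCV, one_apply]

theorem glp_partition_of_unity_general (k d m : ℕ) (pts : Fin m → Fin k → ℝ)
    (V : Matrix (Fin m) {s : Fin k → Fin (d + 1) // ∑ i, (s i : ℕ) ≤ d} ℝ)
    (hV : ∀ i s, V i s = ∏ l, pts i l ^ ((s.1 l : ℕ)))
    (W : Matrix (Fin m) (Fin m) ℝ)
    (hInv : IsUnit (Vᵀ * (W * W) * V))
    (C : Matrix {s : Fin k → Fin (d + 1) // ∑ i, (s i : ℕ) ≤ d} (Fin m) ℝ)
    (hC : C = (Vᵀ * (W * W) * V)⁻¹ * Vᵀ * (W * W))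
    (φ : Fin m → (Fin k → ℝ) → ℝ)
    (hφ : ∀ j u, φ j u = ∑ s, C s j * ∏ l, u l ^ ((s.1 l : ℕ)))
    (u : Fin k → ℝ) :
    ∑ j, φ j u = 1 := by
  have hCV : C * V = 1 := by
    rw [hC, Matrix.mul_assoc _ Vᵀ]
    exact nonsing_inv_mul_mul_self hInv
  let s₀ : {s : Fin k → Fin (d + 1) // ∑ i, (s i : ℕ) ≤ d} := ⟨0, by simp⟩
  have hVs₀ : ∀ i, V i s₀ = 1 := fun i => by simp [hV, s₀]
  simp only [hφ]
  rw [sum_sum_mul_eq_of_mul_eq_one hCV hVs₀]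
  simp [s₀]

/-- the weighted least-squares GLP basis functions form a
partition of unity. -/
theorem glp_partition_of_unity (k d m : ℕ) (pts : Fin m → Fin k → ℝ)
    (V : Matrix (Fin m) {s : Fin k → Fin (d + 1) // ∑ i, (s i : ℕ) ≤ d} ℝ)
    (hV : ∀ i s, V i s = ∏ l, pts i l ^ ((s.1 l : ℕ)))
    (w : Fin m → ℝ) (hw : ∀ i, 0 < w i)
    (W : Matrix (Fin m) (Fin m) ℝ) (hW : W = Matrix.diagonal w)
    (hInv : IsUnit (Vᵀ * (W * W) * V))
    (C : Matrix {s : Fin k → Fin (d + 1) // ∑ i, (s i : ℕ) ≤ d} (Fin m) ℝ)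
    (hC : C = (Vᵀ * (W * W) * V)⁻¹ * Vᵀ * (W * W))
    (φ : Fin m → (Fin k → ℝ) → ℝ)
    (hφ : ∀ j u, φ j u = ∑ s, C s j * ∏ l, u l ^ ((s.1 l : ℕ)))
    (u : Fin k → ℝ) :
    ∑ j, φ j u = 1 :=
  glp_partition_of_unity_general k d m pts V hV W hInv C hC φ hφ u
end

section
/- Let d, m ∈ ℕ with d ≥ 1 and m ≥ 1, let u₀ ∈ ℝ and h > 0, let x₁,…,x_m ∈ [u₀ − h, u₀ + h], and let φ₁,…,φ_m : ℝ → ℝ be differentiable at u₀ and satisfy the degree-d reproduction property on a neighborhood of u₀: for every real polynomial p of degree ≤ d and every u in an open interval containing u₀, Σⱼ p(xⱼ)·φⱼ(u) = p(u). Let Λ′ = Σⱼ |φⱼ′(u₀)|. Let f : ℝ → ℝ be (d+1)-times continuously differentiable on [u₀ − h, u₀ + h] with |f^{(d+1)}(x)| ≤ M there. Then |Σⱼ f(xⱼ)·φⱼ′(u₀) − f′(u₀)| ≤ Λ′·M·h^{d+1}/(d+1)!. -/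
/-!
Taylor's polynomial `T` of `f` at `u₀` of degree `d` is reproduced exactly, and so is its
derivative: differentiating the reproduction identity at `u₀` gives `∑ⱼ T(xⱼ) φⱼ'(u₀) = T'(u₀)
= f'(u₀)`. Hence the error is `∑ⱼ (f(xⱼ) - T(xⱼ)) φⱼ'(u₀)`, and the Lagrange remainder bounds
each `|f(xⱼ) - T(xⱼ)|` by `M h^(d+1) / (d+1)!`.
-/

open Set Filter Topology

theorem iteratedDerivWithin_eq_of_subset {𝕜 F : Type*} [NontriviallyNormedField 𝕜]
    [NormedAddCommGroup F] [NormedSpace 𝕜 F] {f : 𝕜 → F} {s t : Set 𝕜} {n : ℕ} {x : 𝕜}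
    (st : s ⊆ t) (hs : UniqueDiffOn 𝕜 s) (ht : UniqueDiffOn 𝕜 t) (hf : ContDiffOn 𝕜 n f t)
    (hx : x ∈ s) : iteratedDerivWithin n f s x = iteratedDerivWithin n f t x := by
  simp only [iteratedDerivWithin_eq_iteratedFDerivWithin,
    iteratedFDerivWithin_subset st hs ht hf hx]

theorem taylorWithinEval_eq_of_subset {E : Type*} [NormedAddCommGroup E] [NormedSpace ℝ E]
    {f : ℝ → E} {s t : Set ℝ} {n : ℕ} {x₀ : ℝ} (st : s ⊆ t) (hs : UniqueDiffOn ℝ s)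
    (ht : UniqueDiffOn ℝ t) (hf : ContDiffOn ℝ n f t) (hx₀ : x₀ ∈ s) :
    taylorWithinEval f n s x₀ = taylorWithinEval f n t x₀ := by
  funext x
  simp only [taylor_within_apply]
  refine Finset.sum_congr rfl fun k hk => ?_
  rw [iteratedDerivWithin_eq_of_subset st hs ht (hf.of_le ?_) hx₀]
  exact_mod_cast Finset.mem_range_succ_iff.mp hk

theorem abs_sub_taylorWithinEval_le {f : ℝ → ℝ} {A B M c x : ℝ} {n : ℕ}
    (hf : ContDiffOn ℝ (n + 1) f (Icc A B))
    (hM : ∀ y ∈ Icc A B, |iteratedDerivWithin (n + 1) f (Icc A B) y| ≤ M)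
    (hc : c ∈ Icc A B) (hx : x ∈ Icc A B) :
    |f x - taylorWithinEval f n (Icc A B) c x| ≤ M * |x - c| ^ (n + 1) / Nat.factorial (n + 1) := by
  rcases eq_or_ne c x with rfl | hcx
  · simp
  have hsub : uIcc c x ⊆ Icc A B := uIcc_subset_Icc hc hx
  have hAB : A < B := by
    rcases lt_or_gt_of_ne hcx with h | h
    · exact lt_of_le_of_lt hc.1 (h.trans_le hx.2)
    · exact lt_of_le_of_lt hx.1 (h.trans_le hc.2)
  have hu : UniqueDiffOn ℝ (uIcc c x) := uniqueDiffOn_uIcc hcx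
  have hI : UniqueDiffOn ℝ (Icc A B) := uniqueDiffOn_Icc hAB
  have hf' : DifferentiableOn ℝ (iteratedDerivWithin n f (uIcc c x)) (uIoo c x) :=
    ((hf.mono hsub).differentiableOn_iteratedDerivWithin (mod_cast n.lt_succ_self) hu).mono
      Ioo_subset_Icc_self
  obtain ⟨y, hy, hrem⟩ := taylor_mean_remainder_lagrange hcx (hf.mono hsub).of_succ hf'
  rw [← taylorWithinEval_eq_of_subset hsub hu hI hf.of_succ left_mem_uIcc, hrem,
    iteratedDerivWithin_eq_of_subset hsub hu hI hf (Ioo_subset_Icc_self hy),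
    abs_div, abs_mul, abs_pow, Nat.abs_cast]
  gcongr
  exact hM y (hsub (Ioo_subset_Icc_self hy))

theorem deriv_taylorWithinEval_self {E : Type*} [NormedAddCommGroup E] [NormedSpace ℝ E]
    (f : ℝ → E) {n : ℕ} (hn : 1 ≤ n) (s : Set ℝ) (x₀ : ℝ) :
    deriv (taylorWithinEval f n s x₀) x₀ = derivWithin f s x₀ := by
  obtain ⟨n, rfl⟩ := Nat.exists_eq_add_of_le' hn
  rw [(hasDerivAt_taylorWithinEval_succ f n).deriv, taylorWithinEval_self]

-- Mathlib's `taylorWithin` lives in `PolynomialModule ℝ ℝ`, not in `ℝ[X]`.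
open Polynomial in
noncomputable def taylorPolynomial (f : ℝ → ℝ) (n : ℕ) (s : Set ℝ) (x₀ : ℝ) : ℝ[X] :=
  ∑ k ∈ Finset.range (n + 1),
    C ((Nat.factorial k : ℝ)⁻¹ * iteratedDerivWithin k f s x₀) * (X - C x₀) ^ k

theorem eval_taylorPolynomial (f : ℝ → ℝ) (n : ℕ) (s : Set ℝ) (x₀ x : ℝ) :
    (taylorPolynomial f n s x₀).eval x = taylorWithinEval f n s x₀ x := by
  simp only [taylorPolynomial, taylor_within_apply, Polynomial.eval_finsetSum, smul_eq_mul,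
    Polynomial.eval_mul, Polynomial.eval_pow, Polynomial.eval_sub, Polynomial.eval_C,
    Polynomial.eval_X]
  exact Finset.sum_congr rfl fun k _ => by ring

theorem natDegree_taylorPolynomial_le (f : ℝ → ℝ) (n : ℕ) (s : Set ℝ) (x₀ : ℝ) :
    (taylorPolynomial f n s x₀).natDegree ≤ n := by
  refine Polynomial.natDegree_sum_le_of_forall_le _ _ fun k hk => ?_
  refine (Polynomial.natDegree_C_mul_le _ _).trans ?_
  rw [Polynomial.natDegree_pow, Polynomial.natDegree_X_sub_C, mul_one]
  exact Finset.mem_range_succ_iff.mp hk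

theorem sum_mul_deriv_eq_deriv {ι : Type*} [Fintype ι] {x : ι → ℝ} {φ : ι → ℝ → ℝ}
    {g : ℝ → ℝ} {u₀ : ℝ} (hφ : ∀ j, DifferentiableAt ℝ (φ j) u₀)
    (hrep : (fun u => ∑ j, g (x j) * φ j u) =ᶠ[𝓝 u₀] g) :
    ∑ j, g (x j) * deriv (φ j) u₀ = deriv g u₀ := by
  have hD : HasDerivAt (fun u => ∑ j, g (x j) * φ j u) (∑ j, g (x j) * deriv (φ j) u₀) u₀ :=
    HasDerivAt.fun_sum fun j _ => (hφ j).hasDerivAt.const_mul _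
  rw [← hD.deriv, hrep.deriv_eq]

theorem abs_sum_mul_sub_sum_mul_le {ι : Type*} [Fintype ι] {f g w : ι → ℝ} {ε : ℝ}
    (h : ∀ j, |f j - g j| ≤ ε) :
    |∑ j, f j * w j - ∑ j, g j * w j| ≤ ε * ∑ j, |w j| := by
  rw [← Finset.sum_sub_distrib, Finset.mul_sum]
  refine (Finset.abs_sum_le_sum_abs _ _).trans (Finset.sum_le_sum fun j _ => ?_)
  rw [← sub_mul, abs_mul]
  exact mul_le_mul_of_nonneg_right (h j) (abs_nonneg _)

theorem glp_derivative_approximation_general (d m : ℕ) (hd : 1 ≤ d)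
    (u₀ h : ℝ) (hh : 0 < h)
    (x : Fin m → ℝ) (hx : ∀ j, x j ∈ Set.Icc (u₀ - h) (u₀ + h))
    (φ : Fin m → ℝ → ℝ) (hdiff : ∀ j, DifferentiableAt ℝ (φ j) u₀)
    (a b : ℝ) (ha : a < u₀) (hb : u₀ < b)
    (hrep : ∀ p : Polynomial ℝ, p.natDegree ≤ d → ∀ u ∈ Set.Ioo a b,
      ∑ j, p.eval (x j) * φ j u = p.eval u)
    (Λ' : ℝ) (hΛ' : Λ' = ∑ j, |deriv (φ j) u₀|)
    (f : ℝ → ℝ) (M : ℝ)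
    (hf : ContDiffOn ℝ (d + 1) f (Set.Icc (u₀ - h) (u₀ + h)))
    (hM : ∀ y ∈ Set.Icc (u₀ - h) (u₀ + h),
      |iteratedDerivWithin (d + 1) f (Set.Icc (u₀ - h) (u₀ + h)) y| ≤ M) :
    |∑ j, f (x j) * deriv (φ j) u₀ - deriv f u₀| ≤
      Λ' * M * h ^ (d + 1) / (Nat.factorial (d + 1)) := by
  set S := Icc (u₀ - h) (u₀ + h)
  have hu₀ : u₀ ∈ S := ⟨by linarith, by linarith⟩
  set T := taylorWithinEval f d S u₀
  have hexact : ∑ j, T (x j) * deriv (φ j) u₀ = deriv f u₀ := by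
    have hrep_near : (fun u => ∑ j, T (x j) * φ j u) =ᶠ[𝓝 u₀] T := by
      filter_upwards [Ioo_mem_nhds ha hb] with u hu
      simpa only [eval_taylorPolynomial] using
        hrep _ (natDegree_taylorPolynomial_le f d S u₀) u hu
    rw [sum_mul_deriv_eq_deriv hdiff hrep_near, deriv_taylorWithinEval_self f hd,
      derivWithin_of_mem_nhds (Icc_mem_nhds (by linarith) (by linarith))]
  have hrem : ∀ j, |f (x j) - T (x j)| ≤ M * h ^ (d + 1) / Nat.factorial (d + 1) := by
    intro j
    have hxj : |x j - u₀| ≤ h :=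
      abs_sub_le_iff.mpr ⟨by linarith [(hx j).2], by linarith [(hx j).1]⟩
    have hM0 : 0 ≤ M := (abs_nonneg _).trans (hM u₀ hu₀)
    refine (abs_sub_taylorWithinEval_le hf hM hu₀ (hx j)).trans ?_
    gcongr
  calc |∑ j, f (x j) * deriv (φ j) u₀ - deriv f u₀|
      = |∑ j, f (x j) * deriv (φ j) u₀ - ∑ j, T (x j) * deriv (φ j) u₀| := by rw [hexact]
    _ ≤ M * h ^ (d + 1) / Nat.factorial (d + 1) * ∑ j, |deriv (φ j) u₀| :=
        abs_sum_mul_sub_sum_mul_le hrem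
    _ = Λ' * M * h ^ (d + 1) / Nat.factorial (d + 1) := by rw [hΛ']; ring

/-- derivative-approximation estimate for a degree-`d`
reproducing family on a neighborhood of the stencil center. -/
theorem glp_derivative_approximation (d m : ℕ) (hd : 1 ≤ d) (hm : 1 ≤ m)
    (u₀ h : ℝ) (hh : 0 < h)
    (x : Fin m → ℝ) (hx : ∀ j, x j ∈ Set.Icc (u₀ - h) (u₀ + h))
    (φ : Fin m → ℝ → ℝ) (hdiff : ∀ j, DifferentiableAt ℝ (φ j) u₀)
    (a b : ℝ) (ha : a < u₀) (hb : u₀ < b)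
    (hrep : ∀ p : Polynomial ℝ, p.natDegree ≤ d → ∀ u ∈ Set.Ioo a b,
      ∑ j, p.eval (x j) * φ j u = p.eval u)
    (Λ' : ℝ) (hΛ' : Λ' = ∑ j, |deriv (φ j) u₀|)
    (f : ℝ → ℝ) (M : ℝ)
    (hf : ContDiffOn ℝ (d + 1) f (Set.Icc (u₀ - h) (u₀ + h)))
    (hM : ∀ y ∈ Set.Icc (u₀ - h) (u₀ + h),
      |iteratedDerivWithin (d + 1) f (Set.Icc (u₀ - h) (u₀ + h)) y| ≤ M) :
    |∑ j, f (x j) * deriv (φ j) u₀ - deriv f u₀| ≤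
      Λ' * M * h ^ (d + 1) / (Nat.factorial (d + 1)) :=
  glp_derivative_approximation_general d m hd u₀ h hh x hx φ hdiff a b ha hb hrep Λ' hΛ' f M hf hM
end
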